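/- arXiv:1208.4923 — 2 statements merged into one kernel-verified Lean document; each statement's English description precedes it below -/
import Mathlib

section
/- Let n ∈ ℝ with n ≠ 0 and n ≠ −1, let r, p ∈ ℝ, let I ⊆ ℝ be an open interval and ξ : I → (0,∞) smooth. Let f : I → (0,∞) be differentiable with f'(x)/f(x) = −((3n+4)/(2n+2))·ξ'(x)/ξ(x) + r/ξ(x), set h(x) = (ξ'(x)² − 2ξ(x)ξ''(x) − p)/(4(n+1)ξ(x)²), set m = n+1, and set η(t,x,u) = (r/n + ξ'(x)/(2n+2))·u. Then ξ and η satisfy the determining system (E1)–(E5) identically for all t ∈ ℝ, x ∈ I and u > 0. -/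
/-! For `ξ = ξ(x)` and `η = a(x) u` with `m = n + 1`, every equation of the system is a power
of `u` times an ODE condition on `a`: (E1) is void, (E3) is `n` times (E2), and what remains is
`n a = 2ξ' + ξ f'/f`, `ξ'' = 2(n+1) a'` and `ξ h f'/f - ξ h' - n h a - a'' = 0`.
For `a = r/n + ξ'/(2n+2)` the first two follow from the formula for `f'/f`, which also turns
the third into `-(ξ² h)'/ξ = a''`. This holds because `ξ² h = (ξ'² - 2ξξ'' - p)/(4(n+1))`
and `(ξ'² - 2ξξ'')' = -2ξξ'''`. -/

open Real Set

noncomputable section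

/-- Partial derivative in the first variable `t` of a function of `(t, x, u)`. -/
def pt3 (F : ℝ → ℝ → ℝ → ℝ) : ℝ → ℝ → ℝ → ℝ := fun t x v => deriv (fun s => F s x v) t

/-- Partial derivative in the second variable `x` of a function of `(t, x, u)`. -/
def px3 (F : ℝ → ℝ → ℝ → ℝ) : ℝ → ℝ → ℝ → ℝ := fun t x v => deriv (fun y => F t y v) x

/-- Partial derivative in the third variable `u` of a function of `(t, x, u)`. -/
def pu3 (F : ℝ → ℝ → ℝ → ℝ) : ℝ → ℝ → ℝ → ℝ := fun t x v => deriv (fun w => F t x w) v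

/-- The determining system (E1)–(E5) for regular reduction operators
`Q = ∂_t + ξ∂_x + η∂_u` of the equation `f(x)u_tt = (uⁿu_x)_x + h(x)uᵐ`, required to hold
identically for `t ∈ ℝ`, `x ∈ I` and `u > 0`. -/
def DeterminingSystem (n m : ℝ) (f h : ℝ → ℝ) (I : Set ℝ) (Xi Eta : ℝ → ℝ → ℝ → ℝ) : Prop :=
  ∀ t : ℝ, ∀ x ∈ I, ∀ u : ℝ, 0 < u →
    -- (E1)  ξ_u = 0
    pu3 Xi t x u = 0
    -- (E2)  2fξ_t − nηu^{n−1} + (2ξ_x + ξ f_x/f)uⁿ = 0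
    ∧ 2 * f x * pt3 Xi t x u - n * Eta t x u * u ^ (n - 1)
        + (2 * px3 Xi t x u + Xi t x u * deriv f x / f x) * u ^ n = 0
    -- (E3)  (2nξ_x − nη_u + nξ f_x/f)u^{n−1} + (n−n²)ηu^{n−2} − η_{uu}uⁿ + fξ²η_{uu} = 0
    ∧ (2 * n * px3 Xi t x u - n * pu3 Eta t x u + n * Xi t x u * deriv f x / f x) * u ^ (n - 1)
        + (n - n ^ 2) * Eta t x u * u ^ (n - 2)
        - pu3 (pu3 Eta) t x u * u ^ n
        + f x * (Xi t x u) ^ 2 * pu3 (pu3 Eta) t x u = 0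
    -- (E4)  2fξ_tξ_x − 2fξ_tη_u − 2nη_xu^{n−1} − fξ_{tt} − 2fξηη_{uu} − 2fξη_{tu}
    --        + (ξ_{xx} − 2η_{xu})uⁿ = 0
    ∧ 2 * f x * pt3 Xi t x u * px3 Xi t x u - 2 * f x * pt3 Xi t x u * pu3 Eta t x u
        - 2 * n * px3 Eta t x u * u ^ (n - 1)
        - f x * pt3 (pt3 Xi) t x u
        - 2 * f x * Xi t x u * Eta t x u * pu3 (pu3 Eta) t x u
        - 2 * f x * Xi t x u * pt3 (pu3 Eta) t x u
        + (px3 (px3 Xi) t x u - 2 * px3 (pu3 Eta) t x u) * u ^ n = 0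
    -- (E5)  (ξh f_x/f − ξh_x + hη_u)uᵐ + fη²η_{uu} + 2fηη_{tu} − 2fξ_tη_x − η_{xx}uⁿ
    --        + fη_{tt} − mhηu^{m−1} = 0
    ∧ (Xi t x u * h x * deriv f x / f x - Xi t x u * deriv h x + h x * pu3 Eta t x u) * u ^ m
        + f x * (Eta t x u) ^ 2 * pu3 (pu3 Eta) t x u
        + 2 * f x * Eta t x u * pt3 (pu3 Eta) t x u
        - 2 * f x * pt3 Xi t x u * px3 Eta t x u
        - px3 (px3 Eta) t x u * u ^ n
        + f x * pt3 (pt3 Eta) t x u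
        - m * h x * Eta t x u * u ^ (m - 1) = 0

open Filter Topology

section PartialDerivatives

variable (G : ℝ → ℝ → ℝ) (a : ℝ → ℝ)

@[simp]
theorem pt3_indep_t : pt3 (fun _ x u => G x u) = fun _ _ _ => 0 := by
  funext t x u
  simp [pt3]

@[simp]
theorem pu3_indep_u : pu3 (fun _ x _ => a x) = fun _ _ _ => 0 := by
  funext t x u
  simp [pu3]

@[simp]
theorem px3_indep_u : px3 (fun _ x _ => a x) = fun _ x _ => deriv a x := rfl

@[simp]
theorem pu3_mul_right : pu3 (fun _ x u => a x * u) = fun _ x _ => a x := by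
  funext t x u
  simp [pu3]

@[simp]
theorem px3_mul_right : px3 (fun _ x u => a x * u) = fun _ x u => deriv a x * u := by
  funext t x u
  simp [px3, deriv_mul_const_field']

end PartialDerivatives

theorem determiningSystem_of_linear {n : ℝ} {f h ξ a : ℝ → ℝ} {I : Set ℝ}
    (hE2 : ∀ x ∈ I, n * a x = 2 * deriv ξ x + ξ x * deriv f x / f x)
    (hE4 : ∀ x ∈ I, deriv (deriv ξ) x = 2 * (n + 1) * deriv a x)
    (hE5 : ∀ x ∈ I,
      ξ x * h x * deriv f x / f x - ξ x * deriv h x - n * h x * a x - deriv (deriv a) x = 0) :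
    DeterminingSystem n (n + 1) f h I (fun _ x _ => ξ x) (fun _ x u => a x * u) := by
  intro t x hx u hu
  have hu0 : u ≠ 0 := hu.ne'
  have hpow1 : u ^ (n - 1) = u ^ (n - 2) * u := by
    rw [← rpow_add_one hu0]; ring_nf
  have hpow0 : u ^ n = u ^ (n - 2) * u * u := by
    rw [← hpow1, ← rpow_add_one hu0]; ring_nf
  have hpowm : u ^ (n + 1 - 1) = u ^ n := by ring_nf
  simp only [pt3_indep_t, pu3_indep_u, px3_indep_u, pu3_mul_right, px3_mul_right]
  refine ⟨trivial, ?_, ?_, ?_, ?_⟩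
  · rw [hpow0, hpow1]
    linear_combination (-(u ^ (n - 2) * u * u)) * (hE2 x hx)
  · rw [hpow0, hpow1]
    linear_combination (-n * u ^ (n - 2) * u) * (hE2 x hx)
  · rw [hpow0, hpow1]
    linear_combination (u ^ (n - 2) * u * u) * (hE4 x hx)
  · rw [hpowm, rpow_add_one hu0]
    linear_combination (u ^ n * u) * (hE5 x hx)

theorem deriv_eq_of_eventuallyEq_div {h g q : ℝ → ℝ} {x g' q' : ℝ}
    (hh : h =ᶠ[𝓝 x] fun y => g y / q y) (hg : HasDerivAt g g' x) (hq : HasDerivAt q q' x)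
    (hqx : q x ≠ 0) : deriv h x = (g' - q' * h x) / q x := by
  rw [hh.deriv_eq, ← Pi.div_def, (hg.div hq hqx).deriv, hh.eq_of_nhds]
  field_simp

theorem hasDerivAt_deriv_sq_sub_two_mul_deriv_deriv {ξ : ℝ → ℝ} {x : ℝ} (p : ℝ)
    (h0 : DifferentiableAt ℝ ξ x) (h1 : DifferentiableAt ℝ (deriv ξ) x)
    (h2 : DifferentiableAt ℝ (deriv (deriv ξ)) x) :
    HasDerivAt (fun y => deriv ξ y ^ 2 - 2 * ξ y * deriv (deriv ξ) y - p)
      (-2 * ξ x * deriv (deriv (deriv ξ)) x) x := by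
  refine (((h1.hasDerivAt.pow 2).sub
    ((h0.hasDerivAt.const_mul 2).mul h2.hasDerivAt)).sub_const p).congr_deriv ?_
  push_cast
  ring

theorem table_case_1_verification_general
    (n r p : ℝ) (hn : n ≠ 0) (hn1 : n ≠ -1)
    (I : Set ℝ) (hI : IsOpen I)
    (ξ : ℝ → ℝ) (hξ : ContDiffOn ℝ (⊤ : ℕ∞) ξ I) (hξpos : ∀ x ∈ I, 0 < ξ x)
    (f : ℝ → ℝ)
    (hfeq : ∀ x ∈ I,
      deriv f x / f x = -((3 * n + 4) / (2 * n + 2)) * deriv ξ x / ξ x + r / ξ x)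
    (h : ℝ → ℝ)
    (hhdef : ∀ x ∈ I,
      h x = ((deriv ξ x) ^ 2 - 2 * ξ x * deriv (deriv ξ) x - p) / (4 * (n + 1) * (ξ x) ^ 2)) :
    DeterminingSystem n (n + 1) f h I (fun _ x _ => ξ x)
      (fun _ x u => (r / n + deriv ξ x / (2 * n + 2)) * u) := by
  have hn1' : n + 1 ≠ 0 := by contrapose! hn1; linarith
  have h2n2 : 2 * n + 2 ≠ 0 := by contrapose! hn1; linarith
  have hξ1 : ContDiffOn ℝ (⊤ : ℕ∞) (deriv ξ) I := hξ.deriv_of_isOpen hI le_rfl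
  have hξ2 : ContDiffOn ℝ (⊤ : ℕ∞) (deriv (deriv ξ)) I := hξ1.deriv_of_isOpen hI le_rfl
  have hda : deriv (fun x => r / n + deriv ξ x / (2 * n + 2))
      = fun x => deriv (deriv ξ) x / (2 * n + 2) := by
    ext; simp
  have hdda : deriv (fun x => deriv (deriv ξ) x / (2 * n + 2))
      = fun x => deriv (deriv (deriv ξ)) x / (2 * n + 2) := by
    ext; simp
  refine determiningSystem_of_linear (a := fun x => r / n + deriv ξ x / (2 * n + 2))
    (fun x hx => ?_) (fun x hx => ?_) (fun x hx => ?_)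
  · have hξx := (hξpos x hx).ne'
    rw [mul_div_assoc, hfeq x hx]
    field_simp
    ring
  · rw [hda]
    field_simp
  · have hξx := (hξpos x hx).ne'
    have hdiff {g : ℝ → ℝ} (hg : ContDiffOn ℝ (⊤ : ℕ∞) g I) : DifferentiableAt ℝ g x :=
      (hg.differentiableOn (by simp)).differentiableAt (hI.mem_nhds hx)
    have hh' := deriv_eq_of_eventuallyEq_div
      (eventually_of_mem (hI.mem_nhds hx) hhdef)
      (hasDerivAt_deriv_sq_sub_two_mul_deriv_deriv p (hdiff hξ) (hdiff hξ1) (hdiff hξ2))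
      (((hdiff hξ).hasDerivAt.pow 2).const_mul (4 * (n + 1)))
      (by simp [hξx, hn1'])
    rw [mul_div_assoc, hfeq x hx, hh', hhdef x hx, hda, hdda]
    field_simp
    ring

/-- case 1 of Table 1. For `m = n+1`,
`f = |ξ|^{−(3n+4)/(2n+2)} exp(r∫dx/ξ)` (encoded by its logarithmic derivative),
`h = (ξ'² − 2ξξ'' − p)/(4(n+1)ξ²)` and `η = (r/n + ξ'/(2n+2))u`, the determining system
(E1)–(E5) holds identically. -/
theorem table_case_1_verification
    (n r p : ℝ) (hn : n ≠ 0) (hn1 : n ≠ -1)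
    (I : Set ℝ) (hI : IsOpen I) (hIc : I.OrdConnected)
    (ξ : ℝ → ℝ) (hξ : ContDiffOn ℝ (⊤ : ℕ∞) ξ I) (hξpos : ∀ x ∈ I, 0 < ξ x)
    (f : ℝ → ℝ) (hfd : DifferentiableOn ℝ f I) (hfpos : ∀ x ∈ I, 0 < f x)
    (hfeq : ∀ x ∈ I,
      deriv f x / f x = -((3 * n + 4) / (2 * n + 2)) * deriv ξ x / ξ x + r / ξ x)
    (h : ℝ → ℝ)
    (hhdef : ∀ x ∈ I,
      h x = ((deriv ξ x) ^ 2 - 2 * ξ x * deriv (deriv ξ) x - p) / (4 * (n + 1) * (ξ x) ^ 2)) :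
    DeterminingSystem n (n + 1) f h I (fun _ x _ => ξ x)
      (fun _ x u => (r / n + deriv ξ x / (2 * n + 2)) * u) :=
  table_case_1_verification_general n r p hn hn1 I hI ξ hξ hξpos f hfeq h hhdef

end
end

section
/- Let I ⊆ ℝ be an open interval, ξ : I → (0,∞) smooth, Ξ : I → ℝ with Ξ'(x) = 1/ξ(x), and r, c₁ ∈ ℝ. Let φ : ℝ → (0,∞) be twice differentiable with φ'(ω)·(φ(ω) − 1) = 2r·φ(ω)² + c₁ for all ω ∈ ℝ. Define u(t,x) = φ(t − Ξ(x))·ξ(x)^{1/4}·exp(r·Ξ(x)). Then u satisfies ξ(x)^{−7/4}·exp(r·Ξ(x))·u_tt − ∂_x(u·u_x) − ((ξ'(x)² − 2ξ(x)ξ''(x) − 16r²)/(8ξ(x)²))·u² = 0 on ℝ × I. -/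
open Real Set

noncomputable section

/-- Partial derivative in the first (time) variable of a function of `(t, x)`. -/
def pt2 (u : ℝ → ℝ → ℝ) : ℝ → ℝ → ℝ := fun t x => deriv (fun s => u s x) t

/-- Partial derivative in the second (space) variable of a function of `(t, x)`. -/
def px2 (u : ℝ → ℝ → ℝ) : ℝ → ℝ → ℝ := fun t x => deriv (fun y => u t y) x


open Filter Topology

/-!
Write `ω = t - Ξ x` and `A = ξ ^ (1/4) * exp (r * Ξ)`. Since `ω_x = -1/ξ` and `A'/A = (ξ'/4 + r)/ξ`,
the flux is `u * u_x = (A²/ξ) * (φ² (ξ'/4 + r) - φ φ')` while `u_tt = φ'' A`. After dividing the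
equation by `A²/ξ²` every term involving `ξ'` or `ξ''` cancels, and what remains is
`-(φ'' (φ - 1) + φ'² - 4 r φ φ')`: the derivative of the first integral `φ' (φ - 1) - 2 r φ² - c₁`.
-/

open Filter Topology

lemma hasDerivAt_rpow_mul_exp {ξ Ξ : ℝ → ℝ} {x ξ' : ℝ} (p s : ℝ)
    (hξ : HasDerivAt ξ ξ' x) (hξx : ξ x ≠ 0) (hΞ : HasDerivAt Ξ (1 / ξ x) x) :
    HasDerivAt (fun y => ξ y ^ p * exp (s * Ξ y))
      (ξ x ^ p * exp (s * Ξ x) * ((p * ξ' + s) / ξ x)) x := by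
  refine ((hξ.rpow_const (p := p) (Or.inl hξx)).mul (hΞ.const_mul s).exp).congr_deriv ?_
  rw [Real.rpow_sub_one hξx]
  field_simp

lemma hasDerivAt_comp_const_sub_comp {f f' Ξ : ℝ → ℝ} {t x c : ℝ}
    (hf : HasDerivAt f (f' (t - Ξ x)) (t - Ξ x)) (hΞ : HasDerivAt Ξ c x) :
    HasDerivAt (fun y => f (t - Ξ y)) (-(f' (t - Ξ x) * c)) x := by
  refine (hf.comp x ((hasDerivAt_const x t).sub hΞ)).congr_deriv ?_
  ring

lemma first_integral_deriv {φ φ' φ'' : ℝ → ℝ} {r c₁ ω : ℝ}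
    (hd1 : ∀ ω, HasDerivAt φ (φ' ω) ω) (hd2 : HasDerivAt φ' (φ'' ω) ω)
    (hFI : ∀ ω, φ' ω * (φ ω - 1) = 2 * r * φ ω ^ 2 + c₁) :
    φ'' ω * (φ ω - 1) + φ' ω ^ 2 = 4 * r * (φ ω * φ' ω) := by
  have hL : HasDerivAt (fun z => φ' z * (φ z - 1)) _ ω := hd2.mul ((hd1 ω).sub_const 1)
  rw [funext hFI] at hL
  have hR := (((hd1 ω).pow 2).const_mul (2 * r)).add_const c₁
  linear_combination hL.unique hR

lemma pt2_pt2_of_eq_mul {u : ℝ → ℝ → ℝ} {φ φ' φ'' : ℝ → ℝ} {x c a : ℝ}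
    (hd1 : ∀ ω, HasDerivAt φ (φ' ω) ω) {t : ℝ} (hd2 : HasDerivAt φ' (φ'' (t - c)) (t - c))
    (hu : ∀ s, u s x = φ (s - c) * a) :
    pt2 (pt2 u) t x = φ'' (t - c) * a := by
  have hu' : ∀ s, pt2 u s x = φ' (s - c) * a := fun s => by
    simp only [pt2, hu]
    exact (((hd1 _).comp_sub_const s c).mul_const a).deriv
  change deriv (fun s => pt2 u s x) t = _
  simp only [hu']
  exact ((hd2.comp_sub_const t c).mul_const a).deriv

section TravellingWave

variable {ξ ξ' Ξ φ φ' φ'' : ℝ → ℝ} {r t x : ℝ}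

lemma hasDerivAt_wave (hξ : HasDerivAt ξ (ξ' x) x) (hξx : ξ x ≠ 0)
    (hΞ : HasDerivAt Ξ (1 / ξ x) x) (hφ : HasDerivAt φ (φ' (t - Ξ x)) (t - Ξ x)) :
    HasDerivAt (fun y => φ (t - Ξ y) * (ξ y ^ (1 / 4 : ℝ) * exp (r * Ξ y)))
      (ξ x ^ (1 / 4 : ℝ) * exp (r * Ξ x) / ξ x
        * (φ (t - Ξ x) * (ξ' x / 4 + r) - φ' (t - Ξ x))) x := by
  refine ((hasDerivAt_comp_const_sub_comp hφ hΞ).mul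
    (hasDerivAt_rpow_mul_exp (1 / 4) r hξ hξx hΞ)).congr_deriv ?_
  field_simp
  ring

lemma mul_px2_eqOn {I : Set ℝ} {u : ℝ → ℝ → ℝ} (hI : IsOpen I)
    (hξ : ∀ y ∈ I, HasDerivAt ξ (ξ' y) y) (hξ0 : ∀ y ∈ I, ξ y ≠ 0)
    (hΞ : ∀ y ∈ I, HasDerivAt Ξ (1 / ξ y) y) (hφ : ∀ ω, HasDerivAt φ (φ' ω) ω)
    (hu : ∀ y ∈ I, u t y = φ (t - Ξ y) * ξ y ^ (1 / 4 : ℝ) * exp (r * Ξ y)) :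
    EqOn (fun y => u t y * px2 u t y)
      (fun y => (ξ y ^ (1 / 4 : ℝ) * exp (r * Ξ y)) ^ 2 / ξ y
        * (φ (t - Ξ y) ^ 2 * (ξ' y / 4 + r) - φ (t - Ξ y) * φ' (t - Ξ y))) I := by
  intro y hy
  have hev : (fun z => u t z) =ᶠ[𝓝 y]
      fun z => φ (t - Ξ z) * (ξ z ^ (1 / 4 : ℝ) * exp (r * Ξ z)) := by
    filter_upwards [hI.mem_nhds hy] with z hz
    rw [hu z hz, mul_assoc]
  change u t y * deriv (fun z => u t z) y = _
  rw [hev.deriv_eq,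
    (hasDerivAt_wave (hξ y hy) (hξ0 y hy) (hΞ y hy) (hφ _)).deriv, hu y hy]
  ring

lemma hasDerivAt_flux {ξ'' : ℝ} (hξ : HasDerivAt ξ (ξ' x) x) (hξ' : HasDerivAt ξ' ξ'' x)
    (hξx : ξ x ≠ 0) (hΞ : HasDerivAt Ξ (1 / ξ x) x)
    (hφ : HasDerivAt φ (φ' (t - Ξ x)) (t - Ξ x))
    (hφ' : HasDerivAt φ' (φ'' (t - Ξ x)) (t - Ξ x)) :
    HasDerivAt (fun y => (ξ y ^ (1 / 4 : ℝ) * exp (r * Ξ y)) ^ 2 / ξ y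
        * (φ (t - Ξ y) ^ 2 * (ξ' y / 4 + r) - φ (t - Ξ y) * φ' (t - Ξ y)))
      ((ξ x ^ (1 / 4 : ℝ) * exp (r * Ξ x)) ^ 2 / ξ x
        * ((2 * r - ξ' x / 2) / ξ x
            * (φ (t - Ξ x) ^ 2 * (ξ' x / 4 + r) - φ (t - Ξ x) * φ' (t - Ξ x))
          + (φ' (t - Ξ x) ^ 2 + φ (t - Ξ x) * φ'' (t - Ξ x)
              - 2 * φ (t - Ξ x) * φ' (t - Ξ x) * (ξ' x / 4 + r)) / ξ x
          + φ (t - Ξ x) ^ 2 * ξ'' / 4)) x := by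
  have hA := hasDerivAt_rpow_mul_exp (1 / 4) r hξ hξx hΞ
  have hω := hasDerivAt_comp_const_sub_comp hφ hΞ
  have hω' := hasDerivAt_comp_const_sub_comp hφ' hΞ
  refine (((hA.pow 2).div hξ hξx).mul
    (((hω.pow 2).mul ((hξ'.div_const 4).add_const r)).sub (hω.mul hω'))).congr_deriv ?_
  simp only [Pi.mul_apply, Pi.pow_apply, Pi.div_apply, Pi.sub_apply]
  field_simp
  ring

end TravellingWave

lemma wave_residual_eq_zero {X E a b c ξ₁ ξ₂ r : ℝ} (hX : 0 < X)
    (hkey : c * (a - 1) + b ^ 2 = 4 * r * (a * b)) :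
    X ^ (-(7 : ℝ) / 4) * E * (c * (X ^ (1 / 4 : ℝ) * E))
      - (X ^ (1 / 4 : ℝ) * E) ^ 2 / X
        * ((2 * r - ξ₁ / 2) / X * (a ^ 2 * (ξ₁ / 4 + r) - a * b)
          + (b ^ 2 + a * c - 2 * a * b * (ξ₁ / 4 + r)) / X + a ^ 2 * ξ₂ / 4)
      - ((ξ₁ ^ 2 - 2 * X * ξ₂ - 16 * r ^ 2) / (8 * X ^ 2)) * (a * X ^ (1 / 4 : ℝ) * E) ^ 2
      = 0 := by
  rw [show -(7 : ℝ) / 4 = 1 / 4 - (2 : ℕ) by norm_num, Real.rpow_sub hX, Real.rpow_natCast]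
  field_simp
  linear_combination (-64 * (X ^ (1 / 4 : ℝ)) ^ 2 * E ^ 2) * hkey

theorem exact_solution_r_nonzero_general
    (I : Set ℝ) (hI : IsOpen I)
    (ξ : ℝ → ℝ) (hξ : ContDiffOn ℝ (⊤ : ℕ∞) ξ I) (hξpos : ∀ x ∈ I, 0 < ξ x)
    (Ξ : ℝ → ℝ) (hΞ : ∀ x ∈ I, HasDerivAt Ξ (1 / ξ x) x)
    (r c₁ : ℝ)
    (φ φ' φ'' : ℝ → ℝ)
    (hd1 : ∀ ω : ℝ, HasDerivAt φ (φ' ω) ω) (hd2 : ∀ ω : ℝ, HasDerivAt φ' (φ'' ω) ω)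
    (hFI : ∀ ω : ℝ, φ' ω * (φ ω - 1) = 2 * r * (φ ω) ^ 2 + c₁)
    (u : ℝ → ℝ → ℝ)
    (hudef : ∀ t : ℝ, ∀ x ∈ I,
      u t x = φ (t - Ξ x) * ξ x ^ ((1 : ℝ) / 4) * Real.exp (r * Ξ x)) :
    ∀ t : ℝ, ∀ x ∈ I,
      ξ x ^ (-(7 : ℝ) / 4) * Real.exp (r * Ξ x) * pt2 (pt2 u) t x
        - deriv (fun y => u t y * px2 u t y) x
        - (((deriv ξ x) ^ 2 - 2 * ξ x * deriv (deriv ξ) x - 16 * r ^ 2)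
            / (8 * (ξ x) ^ 2)) * (u t x) ^ 2
        = 0 := by
  intro t x hx
  have hξ' : ∀ y ∈ I, HasDerivAt ξ (deriv ξ y) y := fun y hy =>
    ((hξ.differentiableOn (by simp)).differentiableAt (hI.mem_nhds hy)).hasDerivAt
  have hξ'' : HasDerivAt (deriv ξ) (deriv (deriv ξ) x) x :=
    (((hξ.deriv_of_isOpen hI (m := 1) (WithTop.coe_le_coe.mpr le_top)).differentiableOn_one)
      |>.differentiableAt (hI.mem_nhds hx)).hasDerivAt
  have hξ0 : ∀ y ∈ I, ξ y ≠ 0 := fun y hy => (hξpos y hy).ne'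
  have hflux := (mul_px2_eqOn hI hξ' hξ0 hΞ hd1 (hudef t)).eventuallyEq_of_mem (hI.mem_nhds hx)
  rw [pt2_pt2_of_eq_mul hd1 (hd2 _) (fun s => by rw [hudef s x hx, mul_assoc]), hflux.deriv_eq,
    (hasDerivAt_flux (hξ' x hx) hξ'' (hξ0 x hx) (hΞ x hx) (hd1 _) (hd2 _)).deriv, hudef t x hx]
  exact wave_residual_eq_zero (hξpos x hx) (first_integral_deriv hd1 (hd2 _) hFI)

/-- If `φ > 0` is twice differentiable with `φ'(φ − 1) = 2rφ² + c₁`,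
then `u(t,x) = φ(t − Ξ(x))·ξ(x)^{1/4}·e^{rΞ(x)}` solves
`ξ^{−7/4}e^{rΞ}u_tt − (uu_x)_x − ((ξ'² − 2ξξ'' − 16r²)/(8ξ²))u² = 0` on `ℝ × I`. -/
theorem exact_solution_r_nonzero
    (I : Set ℝ) (hI : IsOpen I) (hIc : I.OrdConnected)
    (ξ : ℝ → ℝ) (hξ : ContDiffOn ℝ (⊤ : ℕ∞) ξ I) (hξpos : ∀ x ∈ I, 0 < ξ x)
    (Ξ : ℝ → ℝ) (hΞ : ∀ x ∈ I, HasDerivAt Ξ (1 / ξ x) x)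
    (r c₁ : ℝ)
    (φ φ' φ'' : ℝ → ℝ) (hφpos : ∀ ω : ℝ, 0 < φ ω)
    (hd1 : ∀ ω : ℝ, HasDerivAt φ (φ' ω) ω) (hd2 : ∀ ω : ℝ, HasDerivAt φ' (φ'' ω) ω)
    (hFI : ∀ ω : ℝ, φ' ω * (φ ω - 1) = 2 * r * (φ ω) ^ 2 + c₁)
    (u : ℝ → ℝ → ℝ)
    (hudef : ∀ t : ℝ, ∀ x ∈ I,
      u t x = φ (t - Ξ x) * ξ x ^ ((1 : ℝ) / 4) * Real.exp (r * Ξ x)) :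
    ∀ t : ℝ, ∀ x ∈ I,
      ξ x ^ (-(7 : ℝ) / 4) * Real.exp (r * Ξ x) * pt2 (pt2 u) t x
        - deriv (fun y => u t y * px2 u t y) x
        - (((deriv ξ x) ^ 2 - 2 * ξ x * deriv (deriv ξ) x - 16 * r ^ 2)
            / (8 * (ξ x) ^ 2)) * (u t x) ^ 2
        = 0 :=
  exact_solution_r_nonzero_general I hI ξ hξ hξpos Ξ hΞ r c₁ φ φ' φ'' hd1 hd2 hFI u hudef

end
end
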